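/- arXiv:1707.05276 — 6 statements merged into one kernel-verified Lean document; each statement's English description precedes it below -/
import Mathlib

section
/- Let σ² > 0, B > 0, g̃ > 0, λ > 0, T > 0, μ ≥ 0, p_c ≥ 0, and ω, θ be reals with ω − θ ≤ λ·σ²·ln 2/(B·g̃). Define β(x) = σ²·(2^{x/B} − 1) and F(t, ℓ) = (ω − θ)·ℓ − (λ·t/g̃)·β(ℓ/t) − μ·t − λ·p_c·t. Then F(t, ℓ) ≤ 0 for every t ∈ (0, T] and every ℓ ≥ 0; i.e., the value 0, attained at t = 0, ℓ = 0 (with the convention that the objective is 0 there), is optimal and no offloading is performed. -/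
/-! Since `2 ^ x = exp (x ln 2) ≥ 1 + x ln 2`, the transmit energy `(t/g̃)·β(ℓ/t)` of `ℓ` bits is at
least `σ² ln 2/(B g̃)·ℓ`, the energy of sending them at vanishing rate. Under the threshold
condition the reward `(ω − θ)·ℓ` never exceeds `λ` times this energy, and the remaining terms of
the objective are nonpositive. -/

open Real

theorem mul_log_add_one_le_rpow {b : ℝ} (hb : 0 < b) (x : ℝ) : x * log b + 1 ≤ b ^ x := by
  rw [rpow_def_of_pos hb, mul_comm x]
  exact add_one_le_exp _

theorem mul_le_transmit_energy {σ2 B g t : ℝ} (hσ2 : 0 ≤ σ2) (hB : 0 < B) (hg : 0 < g)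
    (ht : 0 < t) (ℓ : ℝ) :
    σ2 * log 2 / (B * g) * ℓ ≤ t / g * (σ2 * ((2 : ℝ) ^ (ℓ / t / B) - 1)) := by
  have hlinear : σ2 * log 2 / (B * g) * ℓ = t / g * (σ2 * (ℓ / t / B * log 2)) := by
    field_simp
  rw [hlinear]
  gcongr
  linarith [mul_log_add_one_le_rpow two_pos (ℓ / t / B)]

theorem offloading_no_offload_optimal_general
    (σ2 B g lam T μ pc ω θ : ℝ)
    (hσ2 : 0 < σ2) (hB : 0 < B) (hg : 0 < g) (hlam : 0 < lam)
    (hμ : 0 ≤ μ) (hpc : 0 ≤ pc)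
    (hcond : ω - θ ≤ lam * σ2 * Real.log 2 / (B * g)) :
    ∀ t ∈ Set.Ioc (0 : ℝ) T, ∀ ℓ : ℝ, 0 ≤ ℓ →
      (ω - θ) * ℓ - (lam * t / g) * (σ2 * ((2 : ℝ) ^ (ℓ / t / B) - 1)) - μ * t -
        lam * pc * t ≤ 0 := by
  rintro t ⟨ht, -⟩ ℓ hℓ
  have hreward : (ω - θ) * ℓ ≤ lam * t / g * (σ2 * ((2 : ℝ) ^ (ℓ / t / B) - 1)) :=
    calc (ω - θ) * ℓ ≤ lam * σ2 * log 2 / (B * g) * ℓ := by gcongr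
      _ = lam * (σ2 * log 2 / (B * g) * ℓ) := by ring
      _ ≤ lam * (t / g * (σ2 * ((2 : ℝ) ^ (ℓ / t / B) - 1))) :=
        mul_le_mul_of_nonneg_left (mul_le_transmit_energy hσ2.le hB hg ht ℓ) hlam.le
      _ = lam * t / g * (σ2 * ((2 : ℝ) ^ (ℓ / t / B) - 1)) := by ring
  have hμt : 0 ≤ μ * t := by positivity
  have hpct : 0 ≤ lam * pc * t := by positivity
  linarith

/-- If `ω − θ ≤ λ·σ²·ln 2/(B·g̃)`, then the per-user Lagrangian offloading objective
`F(t, ℓ) = (ω − θ)·ℓ − (λ·t/g̃)·β(ℓ/t) − μ·t − λ·p_c·t`, with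
`β(x) = σ²·(2^{x/B} − 1)`, is nonpositive for every `t ∈ (0, T]` and `ℓ ≥ 0`. -/
theorem offloading_no_offload_optimal
    (σ2 B g lam T μ pc ω θ : ℝ)
    (hσ2 : 0 < σ2) (hB : 0 < B) (hg : 0 < g) (hlam : 0 < lam) (hT : 0 < T)
    (hμ : 0 ≤ μ) (hpc : 0 ≤ pc)
    (hcond : ω - θ ≤ lam * σ2 * Real.log 2 / (B * g)) :
    ∀ t ∈ Set.Ioc (0 : ℝ) T, ∀ ℓ : ℝ, 0 ≤ ℓ →
      (ω - θ) * ℓ - (lam * t / g) * (σ2 * ((2 : ℝ) ^ (ℓ / t / B) - 1)) - μ * t -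
        lam * pc * t ≤ 0 :=
  offloading_no_offload_optimal_general σ2 B g lam T μ pc ω θ hσ2 hB hg hlam hμ hpc hcond
end

section
/- Let σ² > 0, B > 0, g̃ > 0, λ > 0, T > 0, μ ≥ 0, p_c ≥ 0, and ω, θ be reals with ω − θ > λ·σ²·ln 2/(B·g̃). Define β(x) = σ²·(2^{x/B} − 1), β'(x) = (σ²·ln 2/B)·2^{x/B}, r* = B·log₂( (ω − θ)·B·g̃ / (λ·σ²·ln 2) ), F(t, ℓ) = (ω − θ)·ℓ − (λ·t/g̃)·β(ℓ/t) − μ·t − λ·p_c·t, and φ = (λ/g̃)·( β(r*) − r*·β'(r*) ) + μ + λ·p_c. If φ ≥ 0, then F(t, ℓ) ≤ 0 for every t ∈ (0, T] and every ℓ ≥ 0, so the optimal value 0 is attained at t* = 0 (with the convention that the objective equals 0 at t = 0, ℓ = 0). -/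
/-! Writing `x = ℓ / t`, the objective is `t` times the per-unit-time rate
`(ω − θ)·x − (λσ²/g̃)·(2^{x/B} − 1) − μ − λ·p_c`, a concave function of `x`. Its stationary point
is `r*`, where it takes the value `−φ`; the tangent line of the convex map `x ↦ 2^{x/B}` at `r*`
shows that this is the maximum, so the objective is at most `−t·φ ≤ 0`. -/

namespace Real

theorem rpow_add_rpow_mul_log_mul_sub_le {b : ℝ} (hb : 0 < b) (x y : ℝ) :
    b ^ y + b ^ y * log b * (x - y) ≤ b ^ x := by
  have htangent : 1 + log b * (x - y) ≤ b ^ (x - y) := by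
    rw [rpow_def_of_pos hb]
    linarith [add_one_le_exp (log b * (x - y))]
  calc b ^ y + b ^ y * log b * (x - y) = b ^ y * (1 + log b * (x - y)) := by ring
    _ ≤ b ^ y * b ^ (x - y) := by gcongr
    _ = b ^ x := by rw [← rpow_add hb, add_sub_cancel]

/-- `hstat` says that `r` is a stationary point of the concave map `x ↦ a·x − c·b^{x/B}`. -/
theorem mul_sub_mul_rpow_div_le_of_stationary {a b c B r : ℝ} (hb : 0 < b) (hc : 0 ≤ c)
    (hB : B ≠ 0) (hstat : c * b ^ (r / B) * log b / B = a) (x : ℝ) :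
    a * x - c * b ^ (x / B) ≤ a * r - c * b ^ (r / B) := by
  have htangent := mul_le_mul_of_nonneg_left
    (rpow_add_rpow_mul_log_mul_sub_le hb (x / B) (r / B)) hc
  rw [← hstat]
  have hlinear : c * b ^ (r / B) * log b / B * x - c * b ^ (r / B) * log b / B * r =
      c * (b ^ (r / B) * log b * (x / B - r / B)) := by
    field_simp
  linarith

end Real

theorem offloading_phi_nonneg_zero_time_optimal_general
    (σ2 B g lam T μ pc ω θ : ℝ)
    (hσ2 : 0 < σ2) (hB : 0 < B) (hg : 0 < g) (hlam : 0 < lam)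
    (hcond : lam * σ2 * Real.log 2 / (B * g) < ω - θ)
    (rstar : ℝ)
    (hrstar : rstar = B * Real.logb 2 ((ω - θ) * B * g / (lam * σ2 * Real.log 2)))
    (φ : ℝ)
    (hφdef : φ = (lam / g) *
        ((σ2 * ((2 : ℝ) ^ (rstar / B) - 1)) -
          rstar * ((σ2 * Real.log 2 / B) * (2 : ℝ) ^ (rstar / B))) + μ + lam * pc)
    (hφ : 0 ≤ φ) :
    ∀ t ∈ Set.Ioc (0 : ℝ) T, ∀ ℓ : ℝ, 0 ≤ ℓ →
      (ω - θ) * ℓ - (lam * t / g) * (σ2 * ((2 : ℝ) ^ (ℓ / t / B) - 1)) - μ * t -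
        lam * pc * t ≤ 0 := by
  rintro t ⟨ht, -⟩ ℓ -
  have hlog2 : 0 < Real.log 2 := Real.log_pos one_lt_two
  have hratio : 0 < (ω - θ) * B * g / (lam * σ2 * Real.log 2) := by
    have : 0 < ω - θ := lt_trans (by positivity) hcond
    positivity
  have hpow : (2 : ℝ) ^ (rstar / B) = (ω - θ) * B * g / (lam * σ2 * Real.log 2) := by
    rw [hrstar, mul_div_cancel_left₀ _ hB.ne']
    exact Real.rpow_logb two_pos (by norm_num) hratio
  have hstat : lam * σ2 / g * (2 : ℝ) ^ (rstar / B) * Real.log 2 / B = ω - θ := by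
    rw [hpow]
    field_simp
  have hmax := Real.mul_sub_mul_rpow_div_le_of_stationary two_pos (by positivity) hB.ne' hstat
    (ℓ / t)
  calc (ω - θ) * ℓ - (lam * t / g) * (σ2 * ((2 : ℝ) ^ (ℓ / t / B) - 1)) - μ * t - lam * pc * t
      = t * ((ω - θ) * (ℓ / t) - lam * σ2 / g * (2 : ℝ) ^ (ℓ / t / B)
          + (lam * σ2 / g - μ - lam * pc)) := by
        field_simp
        ring
    _ ≤ t * ((ω - θ) * rstar - lam * σ2 / g * (2 : ℝ) ^ (rstar / B)
          + (lam * σ2 / g - μ - lam * pc)) := by gcongr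
    _ = -(t * φ) := by
        rw [hφdef, ← hstat]
        field_simp
        ring
    _ ≤ 0 := neg_nonpos.mpr (mul_nonneg ht.le hφ)

/-- If `ω − θ > λ·σ²·ln 2/(B·g̃)` and
`φ = (λ/g̃)·(β(r*) − r*·β'(r*)) + μ + λ·p_c ≥ 0`, where
`β(x) = σ²·(2^{x/B} − 1)`, `β'(x) = (σ²·ln 2/B)·2^{x/B}` and
`r* = B·log₂((ω − θ)·B·g̃/(λ·σ²·ln 2))`, then the per-user Lagrangian offloading
objective `F(t, ℓ) = (ω − θ)·ℓ − (λ·t/g̃)·β(ℓ/t) − μ·t − λ·p_c·t` is nonpositive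
for every `t ∈ (0, T]` and `ℓ ≥ 0` (so the optimal value `0` is attained at `t* = 0`). -/
theorem offloading_phi_nonneg_zero_time_optimal
    (σ2 B g lam T μ pc ω θ : ℝ)
    (hσ2 : 0 < σ2) (hB : 0 < B) (hg : 0 < g) (hlam : 0 < lam) (hT : 0 < T)
    (hμ : 0 ≤ μ) (hpc : 0 ≤ pc)
    (hcond : lam * σ2 * Real.log 2 / (B * g) < ω - θ)
    (rstar : ℝ)
    (hrstar : rstar = B * Real.logb 2 ((ω - θ) * B * g / (lam * σ2 * Real.log 2)))
    (φ : ℝ)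
    (hφdef : φ = (lam / g) *
        ((σ2 * ((2 : ℝ) ^ (rstar / B) - 1)) -
          rstar * ((σ2 * Real.log 2 / B) * (2 : ℝ) ^ (rstar / B))) + μ + lam * pc)
    (hφ : 0 ≤ φ) :
    ∀ t ∈ Set.Ioc (0 : ℝ) T, ∀ ℓ : ℝ, 0 ≤ ℓ →
      (ω - θ) * ℓ - (lam * t / g) * (σ2 * ((2 : ℝ) ^ (ℓ / t / B) - 1)) - μ * t -
        lam * pc * t ≤ 0 :=
  offloading_phi_nonneg_zero_time_optimal_general σ2 B g lam T μ pc ω θ hσ2 hB hg hlam hcond rstar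
    hrstar φ hφdef hφ
end

section
/- Let σ² > 0, B > 0, g̃ > 0, λ > 0, T > 0, μ ≥ 0, p_c ≥ 0, and ω, θ be reals with ω − θ > λ·σ²·ln 2/(B·g̃). Define β(x) = σ²·(2^{x/B} − 1), β'(x) = (σ²·ln 2/B)·2^{x/B}, r* = B·log₂( (ω − θ)·B·g̃ / (λ·σ²·ln 2) ), F(t, ℓ) = (ω − θ)·ℓ − (λ·t/g̃)·β(ℓ/t) − μ·t − λ·p_c·t, and φ = (λ/g̃)·( β(r*) − r*·β'(r*) ) + μ + λ·p_c. If φ ≤ 0, then F(t, ℓ) ≤ F(T, r*·T) = −φ·T for every t ∈ (0, T] and every ℓ ≥ 0; i.e., (t*, ℓ*) = (T, r*·T) maximizes F over (0, T] × [0, ∞). -/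
/-- Tangent line inequality for `2^x` at `a`. -/
lemma two_rpow_tangent (a x : ℝ) :
    (2 : ℝ) ^ a * Real.log 2 * (x - a) ≤ (2 : ℝ) ^ x - (2 : ℝ) ^ a := by
  rw [Real.rpow_def_of_pos two_pos, Real.rpow_def_of_pos two_pos]
  have h := Real.add_one_le_exp ((x - a) * Real.log 2)
  have h2 : Real.exp (Real.log 2 * x) = Real.exp (Real.log 2 * a) *
      Real.exp ((x - a) * Real.log 2) := by
    rw [← Real.exp_add]; ring_nf
  nlinarith [Real.exp_pos (Real.log 2 * a)]

/-- If `ω − θ > λ·σ²·ln 2/(B·g̃)` and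
`φ = (λ/g̃)·(β(r*) − r*·β'(r*)) + μ + λ·p_c ≤ 0`, where
`β(x) = σ²·(2^{x/B} − 1)`, `β'(x) = (σ²·ln 2/B)·2^{x/B}` and
`r* = B·log₂((ω − θ)·B·g̃/(λ·σ²·ln 2))`, then `(t*, ℓ*) = (T, r*·T)` maximizes the
per-user Lagrangian offloading objective
`F(t, ℓ) = (ω − θ)·ℓ − (λ·t/g̃)·β(ℓ/t) − μ·t − λ·p_c·t` over `(0, T] × [0, ∞)`,
and the optimal value is `F(T, r*·T) = −φ·T`. -/
theorem offloading_phi_nonpos_full_time_optimal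
    (σ2 B g lam T μ pc ω θ : ℝ)
    (hσ2 : 0 < σ2) (hB : 0 < B) (hg : 0 < g) (hlam : 0 < lam) (hT : 0 < T)
    (hμ : 0 ≤ μ) (hpc : 0 ≤ pc)
    (hcond : lam * σ2 * Real.log 2 / (B * g) < ω - θ)
    (rstar : ℝ)
    (hrstar : rstar = B * Real.logb 2 ((ω - θ) * B * g / (lam * σ2 * Real.log 2)))
    (φ : ℝ)
    (hφdef : φ = (lam / g) *
        ((σ2 * ((2 : ℝ) ^ (rstar / B) - 1)) -
          rstar * ((σ2 * Real.log 2 / B) * (2 : ℝ) ^ (rstar / B))) + μ + lam * pc)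
    (hφ : φ ≤ 0) :
    (∀ t ∈ Set.Ioc (0 : ℝ) T, ∀ ℓ : ℝ, 0 ≤ ℓ →
      (ω - θ) * ℓ - (lam * t / g) * (σ2 * ((2 : ℝ) ^ (ℓ / t / B) - 1)) - μ * t -
        lam * pc * t ≤
      (ω - θ) * (rstar * T) -
        (lam * T / g) * (σ2 * ((2 : ℝ) ^ (rstar * T / T / B) - 1)) - μ * T -
        lam * pc * T) ∧
    (ω - θ) * (rstar * T) -
        (lam * T / g) * (σ2 * ((2 : ℝ) ^ (rstar * T / T / B) - 1)) - μ * T -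
        lam * pc * T = -φ * T := by
  have hlog2 : 0 < Real.log 2 := Real.log_pos one_lt_two
  have hc : 0 < lam * σ2 * Real.log 2 := by positivity
  set K : ℝ := (ω - θ) * B * g / (lam * σ2 * Real.log 2) with hKdef
  have hK1 : 1 < K := by
    rw [hKdef, lt_div_iff₀ hc]
    have := (div_lt_iff₀ (by positivity : (0:ℝ) < B * g)).1 hcond
    nlinarith
  have hKpos : 0 < K := lt_trans one_pos hK1
  have hω : ω - θ = K * (lam * σ2 * Real.log 2) / (B * g) := by
    rw [hKdef]; field_simp
  have h2r : (2 : ℝ) ^ (rstar / B) = K := by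
    have : rstar / B = Real.logb 2 K := by
      rw [hrstar]; field_simp
    rw [this, Real.rpow_logb two_pos (by norm_num) hKpos]
  -- value at (t, rstar * t) equals -φ * t
  have hval : ∀ t : ℝ, 0 < t →
      (ω - θ) * (rstar * t) -
        (lam * t / g) * (σ2 * ((2 : ℝ) ^ (rstar * t / t / B) - 1)) - μ * t -
        lam * pc * t = -φ * t := by
    intro t ht
    rw [mul_div_cancel_right₀ rstar ht.ne', hφdef, h2r, hω]
    field_simp
    ring
  -- the inequality F(t,ℓ) ≤ -φ * t
  have hle : ∀ t : ℝ, 0 < t → ∀ ℓ : ℝ,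
      (ω - θ) * ℓ - (lam * t / g) * (σ2 * ((2 : ℝ) ^ (ℓ / t / B) - 1)) - μ * t -
        lam * pc * t ≤ -φ * t := by
    intro t ht ℓ
    have h0 : 0 ≤ (2 : ℝ) ^ (ℓ / t / B) - K - K * Real.log 2 * (ℓ / t / B - rstar / B) := by
      have := two_rpow_tangent (rstar / B) (ℓ / t / B)
      rw [h2r] at this; linarith
    have h2 : 0 ≤ lam * t * σ2 / g *
        ((2 : ℝ) ^ (ℓ / t / B) - K - K * Real.log 2 * (ℓ / t / B - rstar / B)) :=
      mul_nonneg (by positivity) h0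
    have hiden : (-φ * t) -
        ((ω - θ) * ℓ - (lam * t / g) * (σ2 * ((2 : ℝ) ^ (ℓ / t / B) - 1)) - μ * t -
          lam * pc * t) = lam * t * σ2 / g *
        ((2 : ℝ) ^ (ℓ / t / B) - K - K * Real.log 2 * (ℓ / t / B - rstar / B)) := by
      rw [hφdef, h2r, hω]
      field_simp
      ring
    linarith
  constructor
  · intro t ht ℓ _
    calc (ω - θ) * ℓ - (lam * t / g) * (σ2 * ((2 : ℝ) ^ (ℓ / t / B) - 1)) - μ * t -
        lam * pc * t ≤ -φ * t := hle t ht.1 ℓ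
      _ ≤ -φ * T := by nlinarith [ht.1, ht.2]
      _ = _ := (hval T hT).symm
  · exact hval T hT
end

section
/- Let σ² > 0, B > 0, g̃ > 0, p_c ≥ 0, ζ > 0, C > 0, and T > 0. Define β(x) = σ²·(2^{x/B} − 1). Then the per-user total energy-consumption function E(q, t, ℓ) = ζ·C³·q³/T² + (t/g̃)·β(ℓ/t) + p_c·t is convex (jointly in (q, t, ℓ)) on the convex set { (q, t, ℓ) ∈ ℝ³ : q ≥ 0, t > 0, ℓ ≥ 0 }. In particular, (t, ℓ) ↦ (t/g̃)·σ²·(2^{ℓ/(B·t)} − 1) is jointly convex on { t > 0, ℓ ≥ 0 }. -/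
/-!
The transmit energy `t ↦ (t / g̃) β(ℓ / t)` is the perspective `t · h(ℓ / t)` of the convex
function `h(x) = (σ² / g̃)(2^(x / B) − 1)`, and perspectives of convex functions are jointly
convex on `t > 0`. The local-computing energy is a nonnegative multiple of the convex cube of
`q ≥ 0`, and the circuit energy is linear, so `E` is a sum of convex functions.
-/

open Set

theorem ConvexOn.perspective {E : Type*} [AddCommGroup E] [Module ℝ E] {f : E → ℝ}
    (hf : ConvexOn ℝ univ f) :
    ConvexOn ℝ {p : ℝ × E | 0 < p.1} fun p => p.1 * f (p.1⁻¹ • p.2) := by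
  refine ⟨convex_halfSpace_gt (LinearMap.fst ℝ ℝ E).isLinear 0, ?_⟩
  rintro ⟨s, x⟩ (hs : 0 < s) ⟨t, y⟩ (ht : 0 < t) a b ha hb hab
  simp only [Prod.smul_mk, Prod.mk_add_mk, smul_eq_mul]
  have hu : 0 < a * s + b * t := by
    rcases ha.eq_or_lt with rfl | ha
    · simp only [zero_add] at hab; subst hab; simpa
    · positivity
  set u := a * s + b * t
  -- Jensen for `f` at `s⁻¹ • x`, `t⁻¹ • y` with the weights `a s / u`, `b t / u`.
  have hweights : a * s / u + b * t / u = 1 := by rw [← add_div, div_self hu.ne']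
  have hpoint : u⁻¹ • (a • x + b • y) = (a * s / u) • s⁻¹ • x + (b * t / u) • t⁻¹ • y := by
    simp only [smul_add, smul_smul]
    congr 2 <;> field_simp
  have hjensen := hf.2 (mem_univ (s⁻¹ • x)) (mem_univ (t⁻¹ • y)) (by positivity) (by positivity)
    hweights
  rw [← hpoint, smul_eq_mul, smul_eq_mul] at hjensen
  calc u * f (u⁻¹ • (a • x + b • y))
      ≤ u * (a * s / u * f (s⁻¹ • x) + b * t / u * f (t⁻¹ • y)) := by gcongr
    _ = a * (s * f (s⁻¹ • x)) + b * (t * f (t⁻¹ • y)) := by field_simp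

theorem convexOn_mul_rpow_div_sub_one {b c : ℝ} (hb : 0 < b) (hc : 0 ≤ c) (B : ℝ) :
    ConvexOn ℝ univ fun x : ℝ => c * (b ^ (x / B) - 1) := by
  have h := ((convexOn_rpow_left hb).comp_linearMap (LinearMap.mul ℝ ℝ B⁻¹)).sub
    (concaveOn_const 1 convex_univ) |>.smul hc
  refine h.congr fun x _ => ?_
  simp [div_eq_inv_mul]

theorem energy_consumption_convex_general
    (σ2 B g pc ζ C T : ℝ)
    (hσ2 : 0 < σ2) (hg : 0 < g)
    (hζ : 0 < ζ) (hC : 0 < C) :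
    ConvexOn ℝ {p : ℝ × ℝ × ℝ | 0 ≤ p.1 ∧ 0 < p.2.1 ∧ 0 ≤ p.2.2}
      (fun p => ζ * C ^ 3 * p.1 ^ 3 / T ^ 2 +
        (p.2.1 / g) * (σ2 * ((2 : ℝ) ^ (p.2.2 / p.2.1 / B) - 1)) + pc * p.2.1) ∧
    ConvexOn ℝ {p : ℝ × ℝ | 0 < p.1 ∧ 0 ≤ p.2}
      (fun p => (p.1 / g) * (σ2 * ((2 : ℝ) ^ (p.2 / (B * p.1)) - 1))) := by
  have htransmit : ConvexOn ℝ {p : ℝ × ℝ | 0 < p.1 ∧ 0 ≤ p.2}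
      fun p => (p.1 / g) * (σ2 * ((2 : ℝ) ^ (p.2 / p.1 / B) - 1)) :=
    ((convexOn_mul_rpow_div_sub_one two_pos (div_nonneg hσ2.le hg.le) B).perspective.subset
      (fun p hp => hp.1) ((convex_Ioi 0).prod (convex_Ici 0))).congr fun p _ => by
        simp only [smul_eq_mul, inv_mul_eq_div]; ring
  refine ⟨?_, htransmit.congr fun p _ => by simp only [div_div, mul_comm B]⟩
  have hS : Convex ℝ {p : ℝ × ℝ × ℝ | 0 ≤ p.1 ∧ 0 < p.2.1 ∧ 0 ≤ p.2.2} :=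
    (convex_Ici 0).prod ((convex_Ioi 0).prod (convex_Ici 0))
  have hcompute : ConvexOn ℝ {p : ℝ × ℝ × ℝ | 0 ≤ p.1 ∧ 0 < p.2.1 ∧ 0 ≤ p.2.2}
      fun p => ζ * C ^ 3 * p.1 ^ 3 / T ^ 2 :=
    (((convexOn_pow 3).smul (by positivity : 0 ≤ ζ * C ^ 3 / T ^ 2)).comp_linearMap
      (LinearMap.fst ℝ ℝ (ℝ × ℝ))).subset (fun p hp => hp.1) hS |>.congr fun p _ => by
        simp only [Function.comp, LinearMap.fst_apply, smul_eq_mul]; ring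
  have hcircuit : ConvexOn ℝ {p : ℝ × ℝ × ℝ | 0 ≤ p.1 ∧ 0 < p.2.1 ∧ 0 ≤ p.2.2}
      fun p => pc * p.2.1 :=
    (pc • (LinearMap.fst ℝ ℝ ℝ ∘ₗ LinearMap.snd ℝ ℝ (ℝ × ℝ))).convexOn hS
  exact (hcompute.add ((htransmit.comp_linearMap (LinearMap.snd ℝ ℝ (ℝ × ℝ))).subset
    (fun p hp => hp.2) hS)).add hcircuit

/-- The per-user total energy-consumption function
`E(q, t, ℓ) = ζ·C³·q³/T² + (t/g̃)·β(ℓ/t) + p_c·t`, with `β(x) = σ²·(2^{x/B} − 1)`,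
is jointly convex on `{(q, t, ℓ) : q ≥ 0, t > 0, ℓ ≥ 0}`; in particular
`(t, ℓ) ↦ (t/g̃)·σ²·(2^{ℓ/(B·t)} − 1)` is jointly convex on `{t > 0, ℓ ≥ 0}`. -/
theorem energy_consumption_convex
    (σ2 B g pc ζ C T : ℝ)
    (hσ2 : 0 < σ2) (hB : 0 < B) (hg : 0 < g) (hpc : 0 ≤ pc)
    (hζ : 0 < ζ) (hC : 0 < C) (hT : 0 < T) :
    ConvexOn ℝ {p : ℝ × ℝ × ℝ | 0 ≤ p.1 ∧ 0 < p.2.1 ∧ 0 ≤ p.2.2}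
      (fun p => ζ * C ^ 3 * p.1 ^ 3 / T ^ 2 +
        (p.2.1 / g) * (σ2 * ((2 : ℝ) ^ (p.2.2 / p.2.1 / B) - 1)) + pc * p.2.1) ∧
    ConvexOn ℝ {p : ℝ × ℝ | 0 < p.1 ∧ 0 ≤ p.2}
      (fun p => (p.1 / g) * (σ2 * ((2 : ℝ) ^ (p.2 / (B * p.1)) - 1))) :=
  energy_consumption_convex_general σ2 B g pc ζ C T hσ2 hg hζ hC
end

section
/- Fix a user index i and positive constants T, L_max, and, for each user k ∈ {1, …, K}: weights ω_k > 0, harvested energies E_k, channel gains g̃_k > 0, circuit powers p_{c,k} > 0, capacitance coefficients ζ_k > 0, cycle counts C_k > 0, maximum CPU frequencies f_k^max > 0, together with σ² > 0, B > 0. Define β(x) = σ²·(2^{x/B} − 1). Call (t, ℓ, q) ∈ ℝ^K × ℝ^K × ℝ^K feasible if for all k: 0 ≤ t_k ≤ T, 0 ≤ ℓ_k ≤ L_max, 0 ≤ q_k ≤ T·f_k^max/C_k, Σ_k t_k ≤ T, Σ_k ℓ_k ≤ L_max, and ζ_k·C_k³·q_k³/T² + (t_k/g̃_k)·β(ℓ_k/t_k)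 + p_{c,k}·t_k ≤ E_k (where the term (t_k/g̃_k)·β(ℓ_k/t_k) is taken to be 0 when t_k = 0 or ℓ_k = 0). Suppose E_i > 0. Then every feasible point (t, ℓ, q) with q_i = 0 is strictly suboptimal: there exists a feasible point (t', ℓ', q') with Σ_k ω_k·(q'_k + ℓ'_k) > Σ_k ω_k·(q_k + ℓ_k). Consequently, at any optimal solution of this problem, q_i > 0. -/
open Finset

/-- Energy consumed for offloading `ℓ` bits in time `t` over a channel with power gain `g`,
noise power `σ²` and bandwidth `B`: `(t/g̃)·β(ℓ/t)` with `β(x) = σ²·(2^{x/B} − 1)`,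
taken to be `0` when `t = 0` or `ℓ = 0`. -/
noncomputable def offlEnergy (σ2 B g t ℓ : ℝ) : ℝ :=
  if t = 0 ∨ ℓ = 0 then 0 else (t / g) * (σ2 * ((2 : ℝ) ^ (ℓ / t / B) - 1))

/-- Feasibility for the resource-allocation part of problem (P1) with the harvested
energies `E k` held fixed. -/
def Feasible (K : ℕ) (T Lmax σ2 B : ℝ) (g pc ζ C fmax E : Fin K → ℝ)
    (t ℓ q : Fin K → ℝ) : Prop :=
  (∀ k, 0 ≤ t k ∧ t k ≤ T ∧ 0 ≤ ℓ k ∧ ℓ k ≤ Lmax ∧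
      0 ≤ q k ∧ q k ≤ T * fmax k / C k ∧
      ζ k * C k ^ 3 * q k ^ 3 / T ^ 2 + offlEnergy σ2 B (g k) (t k) (ℓ k) +
        pc k * t k ≤ E k) ∧
  (∑ k, t k) ≤ T ∧ (∑ k, ℓ k) ≤ Lmax

lemma offl_nonneg {σ2 B g t ℓ : ℝ} (hσ2 : 0 < σ2) (hB : 0 < B) (hg : 0 < g)
    (ht : 0 ≤ t) (hl : 0 ≤ ℓ) : 0 ≤ offlEnergy σ2 B g t ℓ := by
  unfold offlEnergy
  split
  · exact le_refl 0
  · rename_i h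
    push_neg at h
    have ht' : 0 < t := lt_of_le_of_ne ht (Ne.symm h.1)
    have hx : 0 ≤ ℓ / t / B := by positivity
    have h1 : (1:ℝ) ≤ (2:ℝ) ^ (ℓ / t / B) := by
      calc (1:ℝ) = (2:ℝ) ^ (0:ℝ) := by norm_num
      _ ≤ _ := Real.rpow_le_rpow_of_exponent_le one_le_two hx
    have : 0 ≤ (2:ℝ) ^ (ℓ / t / B) - 1 := by linarith
    positivity

lemma offl_scale (σ2 B g t ℓ c : ℝ) :
    offlEnergy σ2 B g (c * t) (c * ℓ) = c * offlEnergy σ2 B g t ℓ := by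
  rcases eq_or_ne c 0 with hc | hc
  · simp [offlEnergy, hc]
  unfold offlEnergy
  by_cases h : t = 0 ∨ ℓ = 0
  · rcases h with h | h <;> simp [h]
  push_neg at h
  rw [if_neg, if_neg (by tauto)]
  · rw [mul_div_mul_left _ _ hc]; field_simp
  · push_neg; exact ⟨mul_ne_zero hc h.1, mul_ne_zero hc h.2⟩

set_option maxHeartbeats 1600000 in
/-- Property (1) of Remark 1: any feasible point at which user `i` (with strictly
positive harvested energy) performs no local computing (`q i = 0`) is strictly
suboptimal for the weighted sum-computation-rate objective. -/
theorem positive_local_computing_optimal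
    (K : ℕ) (i : Fin K) (T Lmax σ2 B : ℝ)
    (hT : 0 < T) (hLmax : 0 < Lmax) (hσ2 : 0 < σ2) (hB : 0 < B)
    (ω g pc ζ C fmax E : Fin K → ℝ)
    (hω : ∀ k, 0 < ω k) (hg : ∀ k, 0 < g k) (hpc : ∀ k, 0 < pc k)
    (hζ : ∀ k, 0 < ζ k) (hC : ∀ k, 0 < C k) (hfmax : ∀ k, 0 < fmax k)
    (hEi : 0 < E i)
    (t ℓ q : Fin K → ℝ)
    (hfeas : Feasible K T Lmax σ2 B g pc ζ C fmax E t ℓ q)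
    (hqi : q i = 0) :
    ∃ t' ℓ' q' : Fin K → ℝ,
      Feasible K T Lmax σ2 B g pc ζ C fmax E t' ℓ' q' ∧
      (∑ k, ω k * (q k + ℓ k)) < ∑ k, ω k * (q' k + ℓ' k) := by
  obtain ⟨hpt, hsumt, hsuml⟩ := hfeas
  obtain ⟨ht0, htT, hl0, hlL, hq0, hqM, hEcon⟩ := hpt i
  have hζi := hζ i; have hCi := hC i; have hfmaxi := hfmax i
  have hωi := hω i; have hgi := hg i; have hpci := hpc i
  have hoff0 : 0 ≤ offlEnergy σ2 B (g i) (t i) (ℓ i) :=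
    offl_nonneg hσ2 hB (hg i) ht0 hl0
  have hA0 : 0 ≤ offlEnergy σ2 B (g i) (t i) (ℓ i) + pc i * t i :=
    add_nonneg hoff0 (mul_nonneg hpci.le ht0)
  have hAE : offlEnergy σ2 B (g i) (t i) (ℓ i) + pc i * t i ≤ E i := by
    rw [hqi] at hEcon
    have h0 : ζ i * C i ^ 3 * 0 ^ 3 / T ^ 2 = 0 := by norm_num
    linarith [hEcon, h0]
  rcases eq_or_lt_of_le hA0 with hA | hA
  · -- A = 0 : just add local computing at i
    have hoffz : offlEnergy σ2 B (g i) (t i) (ℓ i) = 0 := by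
      have := mul_nonneg hpci.le ht0; linarith
    have hpcz : pc i * t i = 0 := by linarith
    obtain ⟨ε, hε0, hε1, hεM, hεE⟩ :
        ∃ ε : ℝ, 0 < ε ∧ ε ≤ 1 ∧ ε ≤ T * fmax i / C i ∧
          ζ i * C i ^ 3 * ε ≤ T ^ 2 * E i := by
      refine ⟨min (T * fmax i / C i) (min 1 (T ^ 2 * E i / (ζ i * C i ^ 3))),
        lt_min (by positivity) (lt_min one_pos (by positivity)),
        le_trans (min_le_right _ _) (min_le_left _ _), min_le_left _ _, ?_⟩
      have h : min (T * fmax i / C i) (min 1 (T ^ 2 * E i / (ζ i * C i ^ 3))) ≤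
          T ^ 2 * E i / (ζ i * C i ^ 3) :=
        le_trans (min_le_right _ _) (min_le_right _ _)
      rw [le_div_iff₀ (by positivity)] at h
      linarith
    have hcube : ε ^ 3 ≤ ε := by
      nlinarith [hε0.le, hε1, sq_nonneg ε, mul_nonneg hε0.le hε0.le]
    have hcube' : ζ i * C i ^ 3 * ε ^ 3 ≤ ζ i * C i ^ 3 * ε :=
      mul_le_mul_of_nonneg_left hcube (by positivity)
    refine ⟨t, ℓ, Function.update q i ε, ⟨fun k => ?_, hsumt, hsuml⟩, ?_⟩
    · rcases eq_or_ne k i with rfl | hk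
      · obtain ⟨a1, a2, a3, a4, _, _, _⟩ := hpt k
        refine ⟨a1, a2, a3, a4, by simp [hε0.le], by simpa using hεM, ?_⟩
        simp only [Function.update_self]
        rw [hoffz, hpcz, add_zero, add_zero, div_le_iff₀ (by positivity)]
        nlinarith [hcube', hεE]
      · simpa [Function.update_of_ne hk] using hpt k
    · apply Finset.sum_lt_sum
      · intro k _
        rcases eq_or_ne k i with rfl | hk
        · simp only [Function.update_self, hqi]
          nlinarith [mul_pos (hω k) hε0]
        · simp [Function.update_of_ne hk]
      · exact ⟨i, mem_univ i, by
          simp only [Function.update_self, hqi]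
          nlinarith [mul_pos hωi hε0]⟩
  · -- 0 < A : scale down (t i, ℓ i) and add local computing
    have hl1 : (0:ℝ) < ℓ i + 1 := by linarith
    obtain ⟨ε, hε0, hε1, hεM, hεA⟩ :
        ∃ ε : ℝ, 0 < ε ∧ ε ≤ 1 ∧ ε ≤ T * fmax i / C i ∧
          ζ i * C i ^ 3 * (ℓ i + 1) * ε ≤
            T ^ 2 * (offlEnergy σ2 B (g i) (t i) (ℓ i) + pc i * t i) := by
      refine ⟨min (T * fmax i / C i)
          (min 1 (T ^ 2 * (offlEnergy σ2 B (g i) (t i) (ℓ i) + pc i * t i) /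
            (ζ i * C i ^ 3 * (ℓ i + 1)))),
        lt_min (by positivity) (lt_min one_pos
          (div_pos (mul_pos (by positivity) hA) (mul_pos (by positivity) hl1))),
        le_trans (min_le_right _ _) (min_le_left _ _), min_le_left _ _, ?_⟩
      have h := le_trans (min_le_right (T * fmax i / C i) _) (min_le_right 1
        (T ^ 2 * (offlEnergy σ2 B (g i) (t i) (ℓ i) + pc i * t i) /
          (ζ i * C i ^ 3 * (ℓ i + 1))))
      rw [le_div_iff₀ (mul_pos (by positivity) hl1)] at h
      linarith
    have hcube : ε ^ 3 ≤ ε := by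
      nlinarith [hε0.le, hε1, sq_nonneg ε, mul_nonneg hε0.le hε0.le]
    have hsq : ε ^ 2 ≤ ε := by
      nlinarith [hε0.le, hε1, mul_nonneg hε0.le hε0.le]
    have hζC : (0:ℝ) < ζ i * C i ^ 3 := by positivity
    have hT2A : (0:ℝ) < T ^ 2 * (offlEnergy σ2 B (g i) (t i) (ℓ i) + pc i * t i) :=
      mul_pos (by positivity) hA
    obtain ⟨θ, hθ0, hθ1, hθA, hθl⟩ :
        ∃ θ : ℝ, 0 ≤ θ ∧ θ ≤ 1 ∧
          θ * (offlEnergy σ2 B (g i) (t i) (ℓ i) + pc i * t i) =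
            ζ i * C i ^ 3 * ε ^ 3 / T ^ 2 ∧
          θ * ℓ i < ε := by
      refine ⟨ζ i * C i ^ 3 * ε ^ 3 /
          (T ^ 2 * (offlEnergy σ2 B (g i) (t i) (ℓ i) + pc i * t i)),
        div_nonneg (by positivity) hT2A.le, ?_, ?_, ?_⟩
      · rw [div_le_one hT2A]
        have h3 : ζ i * C i ^ 3 * ε ^ 3 ≤ ζ i * C i ^ 3 * ε :=
          mul_le_mul_of_nonneg_left hcube hζC.le
        nlinarith [hεA, mul_nonneg (mul_nonneg hζC.le hl0) hε0.le]
      · rw [div_mul_eq_mul_div, div_eq_div_iff hT2A.ne' (by positivity : (T:ℝ) ^ 2 ≠ 0)]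
        ring
      · rw [div_mul_eq_mul_div, div_lt_iff₀ hT2A]
        have h4 : ζ i * C i ^ 3 * ε * ℓ i <
            T ^ 2 * (offlEnergy σ2 B (g i) (t i) (ℓ i) + pc i * t i) := by
          nlinarith [hεA, mul_pos hζC hε0]
        have e2 := mul_lt_mul_of_pos_right h4 (by positivity : (0:ℝ) < ε ^ 2)
        have e3 := mul_le_mul_of_nonneg_left hsq hT2A.le
        nlinarith [e2, e3]
    have h1θ0 : (0:ℝ) ≤ 1 - θ := by linarith
    refine ⟨Function.update t i ((1 - θ) * t i),
            Function.update ℓ i ((1 - θ) * ℓ i),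
            Function.update q i ε, ⟨fun k => ?_, ?_, ?_⟩, ?_⟩
    · rcases eq_or_ne k i with rfl | hk
      · simp only [Function.update_self]
        refine ⟨mul_nonneg h1θ0 ht0, ?_, mul_nonneg h1θ0 hl0, ?_,
          hε0.le, hεM, ?_⟩
        · nlinarith [mul_nonneg hθ0 ht0]
        · nlinarith [mul_nonneg hθ0 hl0]
        · rw [offl_scale]
          have key : θ * (offlEnergy σ2 B (g k) (t k) (ℓ k) + pc k * t k) +
              ((1 - θ) * offlEnergy σ2 B (g k) (t k) (ℓ k) +
                pc k * ((1 - θ) * t k)) =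
              offlEnergy σ2 B (g k) (t k) (ℓ k) + pc k * t k := by ring
          rw [← hθA]
          linarith [key, hAE]
      · simpa [Function.update_of_ne hk] using hpt k
    · calc (∑ k, Function.update t i ((1 - θ) * t i) k) ≤ ∑ k, t k := by
            apply Finset.sum_le_sum
            intro k _
            rcases eq_or_ne k i with rfl | hk
            · simp only [Function.update_self]
              nlinarith [mul_nonneg hθ0 ht0]
            · simp [Function.update_of_ne hk]
          _ ≤ T := hsumt
    · calc (∑ k, Function.update ℓ i ((1 - θ) * ℓ i) k) ≤ ∑ k, ℓ k := by
            apply Finset.sum_le_sum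
            intro k _
            rcases eq_or_ne k i with rfl | hk
            · simp only [Function.update_self]
              nlinarith [mul_nonneg hθ0 hl0]
            · simp [Function.update_of_ne hk]
          _ ≤ Lmax := hsuml
    · apply Finset.sum_lt_sum
      · intro k _
        rcases eq_or_ne k i with rfl | hk
        · simp only [Function.update_self, hqi]
          nlinarith [hθl, mul_pos (hω k) hε0, (hω k)]
        · simp [Function.update_of_ne hk]
      · exact ⟨i, mem_univ i, by
          simp only [Function.update_self, hqi]
          nlinarith [hθl, hωi]⟩
end

section
/- Fix positive constants T, L_max, and, for each user k ∈ {1, …, K}: weights ω_k > 0, harvested energies E_k, channel gains g̃_k > 0, circuit powers p_{c,k} > 0, capacitance coefficients ζ_k > 0, cycle counts C_k > 0, maximum CPU frequencies f_k^max > 0, together with σ² > 0, B > 0. Define β(x) = σ²·(2^{x/B} − 1). Call (t, ℓ, q) ∈ ℝ^K × ℝ^K × ℝ^K feasible if for all k: 0 ≤ t_k ≤ T, 0 ≤ ℓ_k ≤ L_max, 0 ≤ q_k ≤ T·f_k^max/C_k, Σ_k t_k ≤ T, Σ_k ℓ_k ≤ L_max, and ζ_k·C_k³·q_k³/T² + (t_k/g̃_k)·β(ℓ_k/t_k)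 + p_{c,k}·t_k ≤ E_k (where the term (t_k/g̃_k)·β(ℓ_k/t_k) is taken to be 0 when t_k = 0 or ℓ_k = 0). Suppose (t, ℓ, q) maximizes Σ_k ω_k·(q_k + ℓ_k) over all feasible points, and suppose q_i < T·f_i^max/C_i for some index i. Then the energy-harvesting constraint of user i is active: ζ_i·C_i³·q_i³/T² + (t_i/g̃_i)·β(ℓ_i/t_i) + p_{c,i}·t_i = E_i. -/
open Finset

set_option maxHeartbeats 1000000 in
/-- Property (2) of Remark 1: at an optimal solution of the resource-allocation part of
problem (P1), the energy-harvesting constraint of any user `i` whose local-computing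
load is strictly below its CPU cap is active. -/
theorem energy_constraint_active_at_optimum
    (K : ℕ) (i : Fin K) (T Lmax σ2 B : ℝ)
    (hT : 0 < T) (hLmax : 0 < Lmax) (hσ2 : 0 < σ2) (hB : 0 < B)
    (ω g pc ζ C fmax E : Fin K → ℝ)
    (hω : ∀ k, 0 < ω k) (hg : ∀ k, 0 < g k) (hpc : ∀ k, 0 < pc k)
    (hζ : ∀ k, 0 < ζ k) (hC : ∀ k, 0 < C k) (hfmax : ∀ k, 0 < fmax k)
    (t ℓ q : Fin K → ℝ)
    (hfeas : Feasible K T Lmax σ2 B g pc ζ C fmax E t ℓ q)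
    (hopt : ∀ t' ℓ' q' : Fin K → ℝ,
      Feasible K T Lmax σ2 B g pc ζ C fmax E t' ℓ' q' →
      (∑ k, ω k * (q' k + ℓ' k)) ≤ ∑ k, ω k * (q k + ℓ k))
    (hqi : q i < T * fmax i / C i) :
    ζ i * C i ^ 3 * q i ^ 3 / T ^ 2 + offlEnergy σ2 B (g i) (t i) (ℓ i) +
      pc i * t i = E i := by
  obtain ⟨hall, hst, hsl⟩ := hfeas
  by_contra hne
  obtain ⟨ht0, htT, hl0, hlL, hq0, hqc, hE⟩ := hall i
  have hlt : ζ i * C i ^ 3 * q i ^ 3 / T ^ 2 + offlEnergy σ2 B (g i) (t i) (ℓ i) +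
      pc i * t i < E i := lt_of_le_of_ne hE hne
  set R := offlEnergy σ2 B (g i) (t i) (ℓ i) + pc i * t i with hR
  set A := ζ i * C i ^ 3 / T ^ 2 with hA
  have hApos : 0 < A := by
    have h1 := hζ i; have h2 := hC i; positivity
  set s := E i - (A * q i ^ 3 + R) with hs_def
  have hAq : A * q i ^ 3 = ζ i * C i ^ 3 * q i ^ 3 / T ^ 2 := by
    rw [hA]; ring
  have hs : 0 < s := by
    rw [hs_def, hAq]; linarith [hlt]
  set M := 3 * (q i + 1) ^ 2 * A with hM
  have hMpos : 0 < M := by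
    have h1 : (1:ℝ) ≤ (q i + 1) ^ 2 := by nlinarith
    nlinarith
  set ε := min (T * fmax i / C i - q i) (min 1 (s / M)) with hε
  have hεpos : 0 < ε := by
    apply lt_min (by linarith)
    exact lt_min one_pos (div_pos hs hMpos)
  have hεcap : ε ≤ T * fmax i / C i - q i := min_le_left _ _
  have hε1 : ε ≤ 1 := le_trans (min_le_right _ _) (min_le_left _ _)
  have hεs : ε * M ≤ s := by
    have h : ε ≤ s / M :=
      le_trans (min_le_right (T * fmax i / C i - q i) _) (min_le_right 1 (s / M))
    calc ε * M ≤ (s / M) * M := mul_le_mul_of_nonneg_right h hMpos.le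
    _ = s := div_mul_cancel₀ s hMpos.ne'
  clear_value R A s M ε
  have hkey : A * (q i + ε) ^ 3 + R ≤ E i := by
    have hexp : A * (q i + ε) ^ 3 - A * q i ^ 3 ≤ ε * M := by
      have hε2 : ε ^ 2 ≤ ε := by nlinarith [mul_nonneg hεpos.le (sub_nonneg.2 hε1)]
      have hε3 : ε ^ 3 ≤ ε := by
        nlinarith [mul_nonneg (mul_nonneg hεpos.le hεpos.le) (sub_nonneg.2 hε1)]
      have hb : 3 * q i ^ 2 * ε + 3 * q i * ε ^ 2 + ε ^ 3 ≤ ε * (3 * (q i + 1) ^ 2) := by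
        have h1 : 0 ≤ q i * (ε - ε ^ 2) := mul_nonneg hq0 (by linarith)
        have h2 : 0 ≤ ε - ε ^ 3 := by linarith
        have h3 : 0 ≤ q i * ε := mul_nonneg hq0 hεpos.le
        nlinarith [h1, h2, h3]
      calc A * (q i + ε) ^ 3 - A * q i ^ 3
          = A * (3 * q i ^ 2 * ε + 3 * q i * ε ^ 2 + ε ^ 3) := by ring
        _ ≤ A * (ε * (3 * (q i + 1) ^ 2)) := mul_le_mul_of_nonneg_left hb hApos.le
        _ = ε * M := by rw [hM]; ring
    have : A * q i ^ 3 + R + s = E i := by rw [hs_def]; ring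
    linarith
  set q' := Function.update q i (q i + ε) with hq'
  have hfeas' : Feasible K T Lmax σ2 B g pc ζ C fmax E t ℓ q' := by
    refine ⟨fun k => ?_, hst, hsl⟩
    by_cases hk : k = i
    · subst hk
      have hq'i : q' k = q k + ε := Function.update_self _ _ _
      refine ⟨ht0, htT, hl0, hlL, by rw [hq'i]; linarith, by rw [hq'i]; linarith, ?_⟩
      rw [hq'i]
      have : ζ k * C k ^ 3 * (q k + ε) ^ 3 / T ^ 2 = A * (q k + ε) ^ 3 := by
        rw [hA]; ring
      rw [this]
      calc A * (q k + ε) ^ 3 + offlEnergy σ2 B (g k) (t k) (ℓ k) + pc k * t k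
          = A * (q k + ε) ^ 3 + R := by rw [hR]; ring
        _ ≤ E k := hkey
    · have hq'k : q' k = q k := Function.update_of_ne hk _ _
      rw [hq'k]
      exact hall k
  have hle := hopt t ℓ q' hfeas'
  have hsum : (∑ k, ω k * (q' k + ℓ k)) =
      (∑ k, ω k * (q k + ℓ k)) + ω i * ε := by
    have : ∀ k : Fin K, ω k * (q' k + ℓ k) =
        ω k * (q k + ℓ k) + (if k = i then ω i * ε else 0) := by
      intro k
      rw [hq', Function.update_apply]
      by_cases hk : k = i
      · simp [hk]; ring
      · simp [hk]
    rw [Finset.sum_congr rfl (fun k _ => this k), Finset.sum_add_distrib,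
      Finset.sum_ite_eq' univ i (fun _ => ω i * ε)]
    simp
  rw [hsum] at hle
  have : 0 < ω i * ε := mul_pos (hω i) hεpos
  linarith
end
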